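/- For every real number h and every real parameter λ, the triple (c1, c2, c3) = (−λ, −λ, λ² + (1/2)hλ) satisfies c1 = c2 and P(c1, c3, h) = 0. -/
import Mathlib


/-- The first integrability polynomial
`P(c1, c3, h) = h²c1² + h(3c1c3 − 2c1³) + 2c3² − 2c1²c3`. -/
def P (c1 c3 h : ℝ) : ℝ :=
  h ^ 2 * c1 ^ 2 + h * (3 * c1 * c3 - 2 * c1 ^ 3) + 2 * c3 ^ 2 - 2 * c1 ^ 2 * c3

/-- For every real `h` and `λ`, the triple `(c1, c2, c3) = (−λ, −λ, λ² + (1/2)hλ)`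
satisfies `c1 = c2` and `P(c1, c3, h) = 0`. -/
theorem stmt_1 (h lam : ℝ) (c1 c2 c3 : ℝ)
    (hc1 : c1 = -lam) (hc2 : c2 = -lam) (hc3 : c3 = lam ^ 2 + (1 / 2) * h * lam) :
    c1 = c2 ∧ P c1 c3 h = 0 := by
  subst hc1 hc2 hc3; exact ⟨rfl, by unfold P; ring⟩
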